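/- Consider the one-bit phase retrieval link function f(z) = sign(|z| − θ) for a threshold θ > 0, and let Z ~ N(0,1) and p₁ = P(|Z| ≥ θ). Then μ₁ = 0, φ(f) = μ₀(μ₀ − μ₂), and the exact formula φ(f) = −2(2p₁ − 1)·(2θ/√(2π))·e^{−θ²/2} holds. -/

import Mathlib

/-!
Up to the null set `{-θ, θ}`, `sign (|z| - θ) = 1 - 2 · 𝟙_{(-θ, θ)}(z)`, so with `q = P(|Z| < θ)`
and `ρ` the standard normal density, `μ₀ = 1 - 2q` and `μ₂ = E[Z²] - 2 E[Z²; |Z| < θ]`. Since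
`(z ρ(z))' = (1 - z²) ρ(z)`, the truncated second moment is `q - 2θ ρ(θ)`, whence
`μ₀ - μ₂ = -4θ ρ(θ)`. The link function is even, so `μ₁ = 0` by the symmetry of `Z`.
-/

open MeasureTheory ProbabilityTheory Real

/-- The Gaussian moments `μ_k = E[f(Z) Z^k]` for `Z ~ N(0,1)`. -/
noncomputable def gaussMoment (f : ℝ → ℝ) (k : ℕ) : ℝ :=
  ∫ z, f z * z ^ k ∂(gaussianReal 0 1)

/-- `φ(f) = μ₁² − μ₀μ₂ + μ₀²`. -/
noncomputable def phiFun (f : ℝ → ℝ) : ℝ :=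
  gaussMoment f 1 ^ 2 - gaussMoment f 0 * gaussMoment f 2 + gaussMoment f 0 ^ 2

open Set
open scoped NNReal

namespace MeasureTheory

lemma integral_sign_abs_sub_mul {μ : Measure ℝ} [NullSingletonClass μ] {g : ℝ → ℝ}
    (hg : Integrable g μ) (θ : ℝ) :
    ∫ x, Real.sign (|x| - θ) * g x ∂μ = ∫ x, g x ∂μ - 2 * ∫ x in Ioo (-θ) θ, g x ∂μ := by
  have hsign : ∀ᵐ x ∂μ, Real.sign (|x| - θ) * g x = g x - 2 * (Ioo (-θ) θ).indicator g x := by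
    filter_upwards [measure_eq_zero_iff_ae_notMem.1 ((toFinite {-θ, θ}).measure_zero μ)]
      with x hx
    simp only [mem_insert_iff, mem_singleton_iff, not_or] at hx
    rcases lt_trichotomy |x| θ with hlt | heq | hgt
    · have hx : x ∈ Ioo (-θ) θ := abs_lt.1 hlt
      rw [Real.sign_of_neg (by linarith), indicator_of_mem hx]
      ring
    · rcases (abs_eq (heq ▸ abs_nonneg x)).1 heq with h | h <;> tauto
    · have hx : x ∉ Ioo (-θ) θ := fun hx => hgt.not_gt (abs_lt.2 hx)
      rw [Real.sign_of_pos (by linarith), indicator_of_notMem hx]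
      ring
  rw [integral_congr_ae hsign, integral_sub hg ((hg.indicator measurableSet_Ioo).const_mul 2),
    integral_const_mul, integral_indicator measurableSet_Ioo]

end MeasureTheory

namespace ProbabilityTheory

lemma integrable_pow_gaussianReal (μ : ℝ) (v : ℝ≥0) (k : ℕ) :
    Integrable (fun x => x ^ k) (gaussianReal μ v) :=
  (memLp_id_gaussianReal k).integrable_norm_pow'.mono' (by fun_prop)
    (ae_of_all _ fun x => by simp [norm_pow])

lemma integral_sq_gaussianReal_zero (v : ℝ≥0) : ∫ x, x ^ 2 ∂gaussianReal 0 v = v := by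
  have h := variance_of_integral_eq_zero (X := fun x => x) (μ := gaussianReal 0 v)
    aemeasurable_id integral_id_gaussianReal
  rw [variance_fun_id_gaussianReal] at h
  exact h.symm

lemma integral_gaussianReal_eq_zero_of_odd {v : ℝ≥0} {g : ℝ → ℝ} (hg : ∀ x, g (-x) = -g x) :
    ∫ x, g x ∂gaussianReal 0 v = 0 := by
  have h : ∫ x, g (-x) ∂gaussianReal 0 v = ∫ x, g x ∂gaussianReal 0 v := by
    have hmap := integral_map_equiv (μ := gaussianReal 0 v) (MeasurableEquiv.neg ℝ) g
    simpa [gaussianReal_map_neg] using hmap.symm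
  simp only [hg, integral_neg] at h
  linarith

lemma setIntegral_gaussianReal_eq_setIntegral_mul {μ : ℝ} {v : ℝ≥0} (hv : v ≠ 0) {s : Set ℝ}
    (hs : MeasurableSet s) (g : ℝ → ℝ) :
    ∫ x in s, g x ∂gaussianReal μ v = ∫ x in s, gaussianPDFReal μ v x * g x := by
  rw [← integral_indicator hs, integral_gaussianReal_eq_integral_smul hv, ← integral_indicator hs]
  congr 1 with x
  by_cases hx : x ∈ s <;> simp [hx]

lemma gaussianPDFReal_zero_neg (v : ℝ≥0) (x : ℝ) :
    gaussianPDFReal 0 v (-x) = gaussianPDFReal 0 v x := by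
  simp [gaussianPDFReal]

lemma hasDerivAt_gaussianPDFReal (μ : ℝ) (v : ℝ≥0) (x : ℝ) :
    HasDerivAt (gaussianPDFReal μ v) (-(x - μ) / v * gaussianPDFReal μ v x) x := by
  have h : HasDerivAt (fun y => -(y - μ) ^ 2 / (2 * v)) (-(x - μ) / v) x :=
    ((((hasDerivAt_id' x).sub_const μ).fun_pow 2).neg.div_const (2 * (v : ℝ))).congr_deriv
      (by push_cast; ring)
  rw [gaussianPDFReal_def]
  exact (h.exp.const_mul _).congr_deriv (by ring)

lemma hasDerivAt_mul_gaussianPDFReal (x : ℝ) :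
    HasDerivAt (fun y => y * gaussianPDFReal 0 1 y) (gaussianPDFReal 0 1 x * (1 - x ^ 2)) x :=
  ((hasDerivAt_id' x).mul (hasDerivAt_gaussianPDFReal 0 1 x)).congr_deriv (by push_cast; ring)

lemma setIntegral_Ioo_sq_gaussianReal {a b : ℝ} (hab : a ≤ b) :
    ∫ x in Ioo a b, x ^ 2 ∂gaussianReal 0 1
      = (gaussianReal 0 1).real (Ioo a b)
        - (b * gaussianPDFReal 0 1 b - a * gaussianPDFReal 0 1 a) := by
  have hFTC := intervalIntegral.integral_eq_sub_of_hasDerivAt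
    (fun x _ => hasDerivAt_mul_gaussianPDFReal x)
    (Continuous.intervalIntegrable (by unfold gaussianPDFReal; fun_prop) a b)
  rw [intervalIntegral.integral_of_le hab, integral_Ioc_eq_integral_Ioo,
    ← setIntegral_gaussianReal_eq_setIntegral_mul one_ne_zero measurableSet_Ioo,
    integral_sub (integrable_const 1).integrableOn
      (integrable_pow_gaussianReal 0 1 2).integrableOn, setIntegral_const] at hFTC
  simp only [smul_eq_mul, mul_one] at hFTC
  linarith

end ProbabilityTheory

lemma gaussMoment_eq_zero_of_even {f : ℝ → ℝ} (hf : ∀ z, f (-z) = f z) {k : ℕ} (hk : Odd k) :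
    gaussMoment f k = 0 :=
  integral_gaussianReal_eq_zero_of_odd fun z => by rw [hf, hk.neg_pow]; ring

lemma gaussMoment_sign_abs_sub (θ : ℝ) (k : ℕ) :
    gaussMoment (fun z => Real.sign (|z| - θ)) k
      = ∫ z, z ^ k ∂gaussianReal 0 1 - 2 * ∫ z in Ioo (-θ) θ, z ^ k ∂gaussianReal 0 1 :=
  haveI := nullSingletonClass_gaussianReal (μ := 0) one_ne_zero
  integral_sign_abs_sub_mul (integrable_pow_gaussianReal 0 1 k) θ

/-- For the one-bit phase retrieval link function `f(z) = sign(|z| − θ)`, `θ > 0`,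
with `p₁ = P(|Z| ≥ θ)` for `Z ~ N(0,1)`: `μ₁ = 0`, `φ(f) = μ₀(μ₀ − μ₂)`, and
`φ(f) = −2(2p₁ − 1)·(2θ/√(2π))·e^{−θ²/2}`. -/
theorem one_bit_phase_retrieval_phi_formula (θ : ℝ) (hθ : 0 < θ) (f : ℝ → ℝ)
    (hf : f = fun z => Real.sign (|z| - θ)) (p₁ : ℝ)
    (hp₁ : p₁ = ((gaussianReal 0 1) {z : ℝ | θ ≤ |z|}).toReal) :
    gaussMoment f 1 = 0 ∧
    phiFun f = gaussMoment f 0 * (gaussMoment f 0 - gaussMoment f 2) ∧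
    phiFun f = -2 * (2 * p₁ - 1) * (2 * θ / Real.sqrt (2 * Real.pi))
        * Real.exp (-θ ^ 2 / 2) := by
  set q := (gaussianReal 0 1).real (Ioo (-θ) θ)
  have hμ₁ : gaussMoment f 1 = 0 := gaussMoment_eq_zero_of_even (by simp [hf]) odd_one
  have hμ₀ : gaussMoment f 0 = 1 - 2 * q := by simp [hf, gaussMoment_sign_abs_sub, q]
  have hμ₂ : gaussMoment f 2 = 1 - 2 * (q - 2 * θ * gaussianPDFReal 0 1 θ) := by
    rw [hf, gaussMoment_sign_abs_sub, integral_sq_gaussianReal_zero,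
      setIntegral_Ioo_sq_gaussianReal (by linarith), gaussianPDFReal_zero_neg]
    push_cast
    ring
  have hp : p₁ = 1 - q := by
    rw [hp₁, ← measureReal_def, ← probReal_compl_eq_one_sub measurableSet_Ioo]
    congr 1 with z
    simp only [mem_ofPred_eq, mem_compl_iff, mem_Ioo, ← abs_lt, not_lt]
  have hφ : phiFun f = gaussMoment f 0 * (gaussMoment f 0 - gaussMoment f 2) := by
    rw [phiFun, hμ₁]; ring
  refine ⟨hμ₁, hφ, ?_⟩
  have hpdf : gaussianPDFReal 0 1 θ = (√(2 * π))⁻¹ * exp (-θ ^ 2 / 2) := by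
    simp [gaussianPDFReal]
  rw [hφ, hμ₀, hμ₂, hp, hpdf]
  ring
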